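/- Let x be a clustered graph signal of the form x[i] = Σ_l a_l·1_{C_l}[i] for the partition F, with noisy samples y[i] = x[i] + e[i] on a sampling set M ⊆ V that satisfies the network compatibility condition with constants K > 0 and L > 1, and let x̂ be any minimizer of the network Lasso objective with λ = 1/K. Then, writing x̃ := x̂ − x, the inequality λ·(L−1)·‖x̃‖_{∂F} ≤ 2·Σ_{i∈M} |e[i]| holds. -/

import Mathlib

/- Basic inequality for network Lasso: compare the minimizer `x̂` with the true signal `x`, which is
constant across every edge of `E \ ∂F`. Its total variation there is carried entirely by `x̂ − x`,
while on `∂F` the triangle inequality trades `‖x‖_{∂F}` for `‖x̂‖_{∂F} + ‖x̂ − x‖_{∂F}`. The network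
compatibility condition applied to `x̂ − x` then bounds `L·‖x̂ − x‖_{∂F}` by the sample errors plus
`‖x̂ − x‖_{E \ ∂F}`, and adding the two inequalities leaves `(L − 1)·‖x̂ − x‖_{∂F}` on the left. -/

open Finset

variable {V ι : Type*}

/-- Sum of `W i j * |x i − x j|` over a symmetric set `S` of directed edges,
counting each undirected edge `{i,j}` exactly once (hence the division by 2). -/
noncomputable def edgeNorm (W : V → V → ℝ) (S : Finset (V × V)) (x : V → ℝ) : ℝ :=
  (∑ p ∈ S, W p.1 p.2 * |x p.1 - x p.2|) / 2

/-- The neighbourhood `N(i)` of a node `i`. -/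
def nbhd [Fintype V] [DecidableEq V] (E : Finset (V × V)) (i : V) : Finset V :=
  Finset.univ.filter fun j => (i, j) ∈ E

/-- The demand induced by the flow `h` at node `i`:
`d[i] = Σ_{j ∈ N(i)} (h(j,i) − h(i,j))`. -/
noncomputable def demand [Fintype V] [DecidableEq V] (E : Finset (V × V))
    (h : V → V → ℝ) (i : V) : ℝ :=
  ∑ j ∈ nbhd E i, (h j i - h i j)

/-- The boundary `∂F` of the partition with cluster assignment `cl`:
edges whose endpoints lie in different clusters. -/
def bdry [DecidableEq V] [DecidableEq ι] (E : Finset (V × V)) (cl : V → ι) :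
    Finset (V × V) :=
  E.filter fun p => cl p.1 ≠ cl p.2

/-- The nodes `B(F)` incident to at least one boundary edge. -/
def bdryNodes [Fintype V] [DecidableEq V] [DecidableEq ι] (E : Finset (V × V))
    (cl : V → ι) : Finset V :=
  Finset.univ.filter fun i => ∃ j, (i, j) ∈ bdry E cl

/-- The sampling set `M` resolves the partition `cl` with constants `K, L`:
for every choice of bits `b` on the boundary edges (one bit per undirected
boundary edge, encoded by `b (j,i) = !b (i,j)`), there is a flow `h` obeying
the capacity constraints on intra-cluster edges, carrying flow `L·W[i,j]` in
the direction selected by the bit on every boundary edge, and whose demands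
satisfy `|d[i]| ≤ K` on `M` and `d[i] = 0` off `M`. -/
def Resolves [Fintype V] [DecidableEq V] [DecidableEq ι] (E : Finset (V × V))
    (W : V → V → ℝ) (cl : V → ι) (M : Finset V) (K L : ℝ) : Prop :=
  ∀ b : V × V → Bool, (∀ p ∈ bdry E cl, b (p.2, p.1) = !b p) →
    ∃ h : V → V → ℝ,
      (∀ p ∈ E \ bdry E cl, |h p.1 p.2| ≤ W p.1 p.2) ∧
      (∀ p ∈ bdry E cl, h p.1 p.2 = (if b p then (1 : ℝ) else 0) * (L * W p.1 p.2)) ∧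
      (∀ i ∈ M, |demand E h i| ≤ K) ∧
      (∀ i, i ∉ M → demand E h i = 0)

section EdgeNorm

variable (W : V → V → ℝ)

theorem edgeNorm_sub_le {S : Finset (V × V)} (hW : ∀ p ∈ S, 0 ≤ W p.1 p.2) (f g : V → ℝ) :
    edgeNorm W S (f - g) ≤ edgeNorm W S f + edgeNorm W S g := by
  unfold edgeNorm
  rw [← add_div, ← sum_add_distrib]
  gcongr with p hp
  rw [← mul_add]
  gcongr
  · exact hW p hp
  · simpa only [Pi.sub_apply, sub_sub_sub_comm] using abs_sub (f p.1 - f p.2) (g p.1 - g p.2)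

theorem edgeNorm_eq_zero_of_forall_eq {S : Finset (V × V)} {u : V → ℝ}
    (hu : ∀ p ∈ S, u p.1 = u p.2) : edgeNorm W S u = 0 := by
  unfold edgeNorm
  rw [sum_eq_zero fun p hp => by rw [hu p hp, sub_self, abs_zero, mul_zero], zero_div]

theorem edgeNorm_sub_of_forall_eq {S : Finset (V × V)} {u : V → ℝ}
    (hu : ∀ p ∈ S, u p.1 = u p.2) (f : V → ℝ) : edgeNorm W S (f - u) = edgeNorm W S f := by
  unfold edgeNorm
  congr 1
  refine sum_congr rfl fun p hp => ?_
  rw [Pi.sub_apply, Pi.sub_apply, hu p hp, sub_sub_sub_cancel_right]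

variable [DecidableEq V]

theorem edgeNorm_eq_add_sdiff {S E : Finset (V × V)} (h : S ⊆ E) (z : V → ℝ) :
    edgeNorm W E z = edgeNorm W S z + edgeNorm W (E \ S) z := by
  unfold edgeNorm
  rw [← sum_sdiff h, add_comm, add_div]

end EdgeNorm

section NetworkLasso

variable [DecidableEq V]

noncomputable def nLasso (W : V → V → ℝ) (E : Finset (V × V)) (M : Finset V) (y : V → ℝ)
    (lam : ℝ) (z : V → ℝ) : ℝ :=
  ∑ i ∈ M, |z i - y i| + lam * edgeNorm W E z

theorem nLasso_basic_inequality {W : V → V → ℝ} {E S : Finset (V × V)} (hS : S ⊆ E)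
    (hW : ∀ p ∈ S, 0 ≤ W p.1 p.2) {M : Finset V} {y : V → ℝ} {lam : ℝ} (hlam : 0 ≤ lam)
    {x xhat : V → ℝ} (hx : ∀ p ∈ E \ S, x p.1 = x p.2)
    (hmin : nLasso W E M y lam xhat ≤ nLasso W E M y lam x) :
    ∑ i ∈ M, |xhat i - y i| + lam * edgeNorm W (E \ S) (xhat - x) ≤
      ∑ i ∈ M, |x i - y i| + lam * edgeNorm W S (xhat - x) := by
  have htri : edgeNorm W S x ≤ edgeNorm W S xhat + edgeNorm W S (xhat - x) := by
    simpa only [sub_sub_cancel] using edgeNorm_sub_le W hW xhat (xhat - x)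
  unfold nLasso at hmin
  rw [edgeNorm_eq_add_sdiff W hS, edgeNorm_eq_add_sdiff W hS x,
    ← edgeNorm_sub_of_forall_eq W hx xhat, edgeNorm_eq_zero_of_forall_eq W hx, add_zero, mul_add] at hmin
  linarith [mul_le_mul_of_nonneg_left htri hlam]

end NetworkLasso

theorem cl_eq_of_mem_sdiff_bdry [DecidableEq V] [DecidableEq ι]
    {E : Finset (V × V)} {cl : V → ι} {p : V × V} (hp : p ∈ E \ bdry E cl) :
    cl p.1 = cl p.2 := by
  by_contra hne
  exact (mem_sdiff.mp hp).2 (mem_filter.mpr ⟨(mem_sdiff.mp hp).1, hne⟩)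

theorem minimizer_boundary_error_bound_general
    [DecidableEq V] [DecidableEq ι]
    (E : Finset (V × V)) (W : V → V → ℝ)
    (hWpos : ∀ p ∈ E, 0 < W p.1 p.2)
    (cl : V → ι) (a : ι → ℝ) (x : V → ℝ) (hx : ∀ i, x i = a (cl i))
    (M : Finset V) (e y : V → ℝ) (hy : ∀ i ∈ M, y i = x i + e i)
    (K L : ℝ) (hK : 0 < K)
    (hcompat : ∀ z : V → ℝ,
      L * edgeNorm W (bdry E cl) z ≤
        K * (∑ i ∈ M, |z i|) + edgeNorm W (E \ bdry E cl) z)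
    (xhat : V → ℝ)
    (hmin : ∀ z : V → ℝ,
      (∑ i ∈ M, |xhat i - y i|) + (1 / K) * edgeNorm W E xhat ≤
        (∑ i ∈ M, |z i - y i|) + (1 / K) * edgeNorm W E z) :
    (1 / K) * (L - 1) * edgeNorm W (bdry E cl) (fun i => xhat i - x i) ≤
      2 * ∑ i ∈ M, |e i| := by
  have hsub : bdry E cl ⊆ E := filter_subset _ _
  have hbasic := nLasso_basic_inequality hsub (fun p hp => (hWpos p (hsub hp)).le)
    (one_div_pos.mpr hK).le (fun p hp => by rw [hx, hx, cl_eq_of_mem_sdiff_bdry hp]) (hmin x)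
  have hxy : ∑ i ∈ M, |x i - y i| = ∑ i ∈ M, |e i| :=
    sum_congr rfl fun i hi => by rw [hy i hi, sub_add_cancel_left, abs_neg]
  have hsamples : ∑ i ∈ M, |(xhat - x) i| ≤ ∑ i ∈ M, |xhat i - y i| + ∑ i ∈ M, |e i| := by
    rw [← sum_add_distrib]
    refine sum_le_sum fun i hi => ?_
    calc |(xhat - x) i| = |(xhat i - y i) + e i| := by rw [Pi.sub_apply, hy i hi]; ring_nf
      _ ≤ |xhat i - y i| + |e i| := abs_add_le _ _
  have hscaled := mul_le_mul_of_nonneg_left hbasic hK.le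
  rw [mul_add, mul_add, ← mul_assoc, ← mul_assoc, mul_one_div_cancel hK.ne', one_mul, one_mul,
    hxy] at hscaled
  rw [one_div, mul_assoc, inv_mul_le_iff₀ hK]
  change (L - 1) * edgeNorm W (bdry E cl) (xhat - x) ≤ _
  linarith [hcompat (xhat - x), mul_le_mul_of_nonneg_left hsamples hK.le]

/-- Under the network compatibility condition with `K > 0` and
`L > 1`, any nLasso minimizer with `λ = 1/K` satisfies, for `x̃ = x̂ − x`,
`λ·(L−1)·‖x̃‖_{∂F} ≤ 2·Σ_{i∈M}|e[i]|`. -/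
theorem minimizer_boundary_error_bound
    [Fintype V] [DecidableEq V] [DecidableEq ι]
    (E : Finset (V × V)) (W : V → V → ℝ)
    (hEsymm : ∀ i j : V, (i, j) ∈ E → (j, i) ∈ E)
    (hEirr : ∀ i : V, (i, i) ∉ E)
    (hWsymm : ∀ i j : V, W i j = W j i)
    (hWpos : ∀ p ∈ E, 0 < W p.1 p.2)
    (hWzero : ∀ i j : V, (i, j) ∉ E → W i j = 0)
    (cl : V → ι) (a : ι → ℝ) (x : V → ℝ) (hx : ∀ i, x i = a (cl i))
    (M : Finset V) (e y : V → ℝ) (hy : ∀ i ∈ M, y i = x i + e i)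
    (K L : ℝ) (hK : 0 < K) (hL : 1 < L)
    (hcompat : ∀ z : V → ℝ,
      L * edgeNorm W (bdry E cl) z ≤
        K * (∑ i ∈ M, |z i|) + edgeNorm W (E \ bdry E cl) z)
    (xhat : V → ℝ)
    (hmin : ∀ z : V → ℝ,
      (∑ i ∈ M, |xhat i - y i|) + (1 / K) * edgeNorm W E xhat ≤
        (∑ i ∈ M, |z i - y i|) + (1 / K) * edgeNorm W E z) :
    (1 / K) * (L - 1) * edgeNorm W (bdry E cl) (fun i => xhat i - x i) ≤
      2 * ∑ i ∈ M, |e i| :=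
  minimizer_boundary_error_bound_general E W hWpos cl a x hx M e y hy K L hK hcompat xhat hmin
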